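/- Let p be an odd prime. The number of residues a mod p with a² - 4 a quadratic nonresidue mod p is (p-1)/2. -/

import Mathlib

/-!
Write `χ` for the quadratic character of a finite field `F` of odd characteristic. Since
`x ↦ x²` hits `y` exactly `χ y + 1` times, `∑ₓ χ(x² - c) = ∑_y χ(y) χ(y - c) + ∑_y χ(y - c)`;
the second sum vanishes and the first is, after `y = c t`, the Jacobi sum `J(χ, χ) = -χ(-1)`
times `χ(-1)`, so `∑ₓ χ(x² - c) = -1` for `c ≠ 0`. As `χ(x² - c) ∈ {0, ±1}` and `x² - c`
vanishes `χ c + 1` times, twice the number of nonresidues `x² - c` is `|F| - χ c`,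
which for `c = 4` and `F = ZMod p` is `p - 1`.
-/

open Finset

section FiniteField

variable {F : Type*} [Field F] [Fintype F] [DecidableEq F]

theorem quadraticChar_sum_mul_sub_eq_neg_one (hF : ringChar F ≠ 2) {c : F} (hc : c ≠ 0) :
    ∑ y : F, quadraticChar F y * quadraticChar F (y - c) = -1 := by
  have hJ := jacobiSum_nontrivial_inv (quadraticChar_ne_one hF)
  rw [(quadraticChar_isQuadratic F).inv, jacobiSum] at hJ
  rw [← Equiv.sum_comp (Equiv.mulLeft₀ c hc)]
  calc ∑ t : F, quadraticChar F (c * t) * quadraticChar F (c * t - c)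
      = ∑ t : F, quadraticChar F (c ^ 2) * quadraticChar F (-1) *
          (quadraticChar F t * quadraticChar F (1 - t)) := by
        refine sum_congr rfl fun t _ => ?_
        rw [show c * t - c = c * (-1) * (1 - t) by ring]
        simp only [map_mul, pow_two]
        ring
    _ = -1 := by
        rw [← mul_sum, hJ, quadraticChar_sq_one' hc, one_mul, mul_neg,
          ← map_mul, neg_one_mul, neg_neg, map_one]

theorem quadraticChar_sum_sq_sub_eq_neg_one (hF : ringChar F ≠ 2) {c : F} (hc : c ≠ 0) :
    ∑ x : F, quadraticChar F (x ^ 2 - c) = -1 := by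
  calc ∑ x : F, quadraticChar F (x ^ 2 - c)
      = ∑ y : F, (quadraticChar F y + 1) * quadraticChar F (y - c) := by
        rw [← sum_fiberwise univ (· ^ 2)]
        refine sum_congr rfl fun y _ => ?_
        rw [← quadraticChar_card_sqrts hF y, Set.toFinset_ofPred,
          sum_congr rfl fun x hx => by rw [(mem_filter.1 hx).2], sum_const, nsmul_eq_mul]
    _ = -1 := by
        have hshift : ∑ y : F, quadraticChar F (y - c) = 0 :=
          ((Equiv.subRight c).sum_comp (quadraticChar F)).trans (quadraticChar_sum_zero hF)
        rw [sum_congr rfl fun y _ => add_one_mul .., sum_add_distrib,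
          quadraticChar_sum_mul_sub_eq_neg_one hF hc, hshift, add_zero]

theorem two_mul_card_filter_quadraticChar_eq_neg_one {α : Type*} (s : Finset α) (f : α → F) :
    (2 * #{x ∈ s | quadraticChar F (f x) = -1} : ℤ) =
      #{x ∈ s | f x ≠ 0} - ∑ x ∈ s, quadraticChar F (f x) := by
  rw [natCast_card_filter, natCast_card_filter, mul_sum, ← sum_sub_distrib]
  refine sum_congr rfl fun x _ => ?_
  by_cases h : f x = 0
  · simp [h]
  · rcases quadraticChar_dichotomy h with hχ | hχ <;> simp [h, hχ]

theorem two_mul_card_quadraticChar_sq_sub_eq_neg_one (hF : ringChar F ≠ 2) {c : F} (hc : c ≠ 0) :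
    (2 * #{x : F | quadraticChar F (x ^ 2 - c) = -1} : ℤ) =
      Fintype.card F - quadraticChar F c := by
  have hcard : (#{x : F | x ^ 2 - c ≠ 0} : ℤ) = Fintype.card F - (quadraticChar F c + 1) := by
    rw [← quadraticChar_card_sqrts hF c, Set.toFinset_ofPred, ← card_univ,
      ← card_filter_add_card_filter_not (s := univ) (fun x : F => x ^ 2 = c)]
    simp only [sub_ne_zero]
    push_cast
    ring
  rw [two_mul_card_filter_quadraticChar_eq_neg_one, quadraticChar_sum_sq_sub_eq_neg_one hF hc,
    hcard]
  ring

end FiniteField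

theorem card_filter_range_natCast_eq {n : ℕ} [NeZero n] (P : ZMod n → Prop) [DecidablePred P] :
    #((range n).filter fun a : ℕ => P a) = #{x : ZMod n | P x} :=
  card_nbij' (fun a => a) ZMod.val
    (fun a ha => by simpa using (mem_filter.1 ha).2)
    (fun x hx => by simpa [ZMod.val_lt] using (mem_filter.1 hx).2)
    (fun a ha => ZMod.val_cast_of_lt (mem_range.1 (mem_filter.1 ha).1))
    (fun x _ => ZMod.natCast_zmod_val x)

theorem stmt_1 (p : ℕ) [Fact p.Prime] (hp : 3 ≤ p) :
    ((Finset.range p).filter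
      (fun a : ℕ => legendreSym p ((a : ℤ) ^ 2 - 4) = -1)).card = (p - 1) / 2 := by
  have hF : ringChar (ZMod p) ≠ 2 := by
    rw [ZMod.ringChar_zmod_n]
    omega
  have hfour : (4 : ZMod p) = 2 ^ 2 := by norm_num
  have hfour_ne : (4 : ZMod p) ≠ 0 := hfour ▸ pow_ne_zero 2 (Ring.two_ne_zero hF)
  have hχfour : quadraticChar (ZMod p) 4 = 1 :=
    hfour ▸ quadraticChar_sq_one' (Ring.two_ne_zero hF)
  have hcount := two_mul_card_quadraticChar_sq_sub_eq_neg_one hF hfour_ne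
  rw [hχfour, ZMod.card] at hcount
  have hlegendre (a : ℕ) :
      legendreSym p ((a : ℤ) ^ 2 - 4) = quadraticChar (ZMod p) ((a : ZMod p) ^ 2 - 4) := by
    simp [legendreSym]
  simp only [hlegendre]
  rw [card_filter_range_natCast_eq (fun x : ZMod p => quadraticChar (ZMod p) (x ^ 2 - 4) = -1)]
  omega
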